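/- The function l : ℂ² → ℂ, l(w₁, w₂) = ∫∫ exp(−i·Im(z₁w₁ + z₂w₂ − (s/4)·z₁·conj(z₂))) / ((1+|z₁|²)²·(1+|z₂|²)²) d²z₁ d²z₂ is well defined (the integrand is absolutely integrable) and l ∈ L¹(ℂ²), i.e., ∫∫ |l(w₁,w₂)| d²w₁ d²w₂ < ∞. -/

import Mathlib

/-!
Subordination: `(1 + |z|²)⁻² = ∫₀^∞ r e^{-(1+|z|²) r} dr`. By Fubini (the integrand is absolutely
integrable) `l(w)` is the integral over `r ∈ (0, ∞)²` of the Gaussian integral `L_r(w)` obtained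
by replacing the weights with `r₁ e^{-(1+|z₁|²) r₁} r₂ e^{-(1+|z₂|²) r₂}`. In the phase the twist
only shifts the `z₂`-frequency from `w₂` to `w₂ + (s/4) z̄₁`, so `z₂` integrates out to a Gaussian
in `z₁`, and then `z₁` does too. Thus `|L_r(w)|` is an explicit Gaussian in `w` with
`∫ |L_r(w)| dw = 16 π⁴ (r₁ r₂ + (s/8)²) e^{-r₁-r₂}`, which is integrable over `r`. Hence
`(r, w) ↦ L_r(w)` is integrable, and so is `l = ∫ L_r dr`.
-/

open MeasureTheory

/-- The integrand of the function `l`: the twisted Fourier kernel divided by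
`(1+|z₁|²)² (1+|z₂|²)²`. -/
noncomputable def lInt (s : ℝ) (w z : ℂ × ℂ) : ℂ :=
  Complex.exp (-Complex.I *
      (((z.1 * w.1 + z.2 * w.2 - ((s / 4 : ℝ) : ℂ) * z.1 * (starRingEnd ℂ z.2)).im : ℝ) : ℂ)) /
    (((1 + ‖z.1‖ ^ 2) ^ 2 * (1 + ‖z.2‖ ^ 2) ^ 2 : ℝ) : ℂ)

open Set Complex Real

theorem integral_Ioi_mul_exp_neg_mul {c : ℝ} (hc : 0 < c) :
    ∫ r in Ioi 0, r * rexp (-(c * r)) = (c ^ 2)⁻¹ := by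
  have h := integral_rpow_mul_exp_neg_mul_Ioi two_pos hc
  norm_num at h
  simpa [inv_pow] using h

theorem integrableOn_Ioi_mul_exp_neg_mul {c : ℝ} (hc : 0 < c) :
    IntegrableOn (fun r => r * rexp (-(c * r))) (Ioi 0) :=
  Integrable.of_integral_ne_zero <| by rw [integral_Ioi_mul_exp_neg_mul hc]; positivity

namespace Complex

theorem ofReal_norm_sq (z : ℂ) : (‖z‖ : ℂ) ^ 2 = (z.re : ℂ) ^ 2 + (z.im : ℂ) ^ 2 := by
  rw [← ofReal_pow, Complex.sq_norm, normSq_apply]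
  push_cast
  ring

theorem norm_exp_neg_I_mul_ofReal (x : ℝ) : ‖cexp (-I * x)‖ = 1 := by
  rw [neg_mul, ← mul_neg, ← ofReal_neg, norm_exp_I_mul_ofReal]

theorem integral_cexp_neg_mul_sq_norm_add_re_im {b : ℂ} (hb : 0 < b.re) (c₁ c₂ : ℂ) :
    ∫ z : ℂ, cexp (-b * ‖z‖ ^ 2 + (c₁ * z.re + c₂ * z.im)) =
      π / b * cexp ((c₁ ^ 2 + c₂ ^ 2) / (4 * b)) := by
  rw [← volume_preserving_equiv_pi.symm.integral_comp measurableEquivPi.symm.measurableEmbedding]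
  convert GaussianFourier.integral_cexp_neg_mul_sum_add hb ![c₁, c₂] using 3 with v
  · rfl
  · simp only [ofReal_norm_sq]
    simp [Fin.sum_univ_two]
  · norm_num
  · simp [Fin.sum_univ_two]

theorem integral_exp_neg_I_mul_im_mul_exp_neg_mul_sq_norm {b : ℝ} (hb : 0 < b) (u : ℂ) :
    ∫ z : ℂ, cexp (-I * (z * u).im) * rexp (-b * ‖z‖ ^ 2) = π / b * rexp (-‖u‖ ^ 2 / (4 * b)) := by
  have h := integral_cexp_neg_mul_sq_norm_add_re_im (b := b) hb (-I * u.im) (-I * u.re)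
  have hexp : ((-I * u.im) ^ 2 + (-I * u.re) ^ 2) / (4 * b) = ((-‖u‖ ^ 2 / (4 * b) : ℝ) : ℂ) := by
    push_cast
    rw [ofReal_norm_sq]
    linear_combination ((u.im : ℂ) ^ 2 + (u.re : ℂ) ^ 2) / (4 * b) * I_sq
  rw [hexp, ← ofReal_exp] at h
  rw [← h]
  congr 1 with z
  rw [ofReal_exp, ← Complex.exp_add]
  congr 1
  simp only [mul_im]
  push_cast
  ring

theorem integral_exp_neg_mul_sq_norm {b : ℝ} (hb : 0 < b) :
    ∫ z : ℂ, rexp (-b * ‖z‖ ^ 2) = π / b := by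
  rw [GaussianFourier.integral_rexp_neg_mul_sq_norm hb, finrank_real_complex]
  norm_num

theorem integrable_exp_neg_mul_sq_norm {b : ℝ} (hb : 0 < b) :
    Integrable fun z : ℂ => rexp (-b * ‖z‖ ^ 2) :=
  Integrable.of_integral_ne_zero <| by rw [integral_exp_neg_mul_sq_norm hb]; positivity

theorem integrable_inv_one_add_sq_norm_sq : Integrable fun z : ℂ => ((1 + ‖z‖ ^ 2) ^ 2)⁻¹ := by
  have h := integrable_rpow_neg_one_add_norm_sq (E := ℂ) (μ := volume) (r := 4)
    (by rw [finrank_real_complex]; norm_num)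
  refine h.congr (Filter.Eventually.of_forall fun z => ?_)
  simp only
  rw [show (-4 / 2 : ℝ) = ((-2 : ℤ) : ℝ) by norm_num, rpow_intCast, zpow_neg, zpow_ofNat]

end Complex

theorem integrable_inv_one_add_sq_norm_sq_prod :
    Integrable fun z : ℂ × ℂ => ((1 + ‖z.1‖ ^ 2) ^ 2)⁻¹ * ((1 + ‖z.2‖ ^ 2) ^ 2)⁻¹ := by
  rw [Measure.volume_eq_prod]
  exact integrable_inv_one_add_sq_norm_sq.mul_prod integrable_inv_one_add_sq_norm_sq

noncomputable section

def twistedPhase (s : ℝ) (w z : ℂ × ℂ) : ℝ :=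
  (z.1 * w.1 + z.2 * w.2 - ((s / 4 : ℝ) : ℂ) * z.1 * starRingEnd ℂ z.2).im

def subordWeight (r : ℝ) (z : ℂ) : ℝ := r * rexp (-((1 + ‖z‖ ^ 2) * r))

def subordKernel (s : ℝ) (r : ℝ × ℝ) (w z : ℂ × ℂ) : ℂ :=
  cexp (-I * twistedPhase s w z) * (subordWeight r.1 z.1 * subordWeight r.2 z.2 : ℝ)

/-- The function `L_r` of the proof sketch above. -/
def subordL (s : ℝ) (r : ℝ × ℝ) (w : ℂ × ℂ) : ℂ := ∫ z, subordKernel s r w z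

abbrev posQuadrant : Measure (ℝ × ℝ) :=
  (volume.restrict (Ioi 0)).prod (volume.restrict (Ioi 0))

end

theorem twistedPhase_eq (s : ℝ) (w z : ℂ × ℂ) :
    twistedPhase s w z =
      (z.1 * w.1).im + (z.2 * (w.2 + ((s / 4 : ℝ) : ℂ) * starRingEnd ℂ z.1)).im := by
  simp only [twistedPhase, add_im, sub_im, add_re, mul_im, mul_re, conj_re, conj_im, ofReal_re,
    ofReal_im]
  ring

theorem integrable_exp_twistedPhase_mul (s : ℝ) (w : ℂ × ℂ) {g : ℂ × ℂ → ℝ}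
    (hg : Integrable g) : Integrable fun z => cexp (-I * twistedPhase s w z) * g z :=
  hg.ofReal.bdd_mul (c := 1) (Continuous.aestronglyMeasurable (by unfold twistedPhase; fun_prop))
    (Filter.Eventually.of_forall fun _ => (norm_exp_neg_I_mul_ofReal _).le)

theorem lInt_eq (s : ℝ) (w z : ℂ × ℂ) :
    lInt s w z = cexp (-I * twistedPhase s w z) *
      (((1 + ‖z.1‖ ^ 2) ^ 2)⁻¹ * ((1 + ‖z.2‖ ^ 2) ^ 2)⁻¹ : ℝ) := by
  rw [lInt, twistedPhase, div_eq_mul_inv, ← ofReal_inv, mul_inv]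

theorem integrable_lInt (s : ℝ) (w : ℂ × ℂ) : Integrable (lInt s w) := by
  simp_rw [funext (lInt_eq s w)]
  exact integrable_exp_twistedPhase_mul s w integrable_inv_one_add_sq_norm_sq_prod

theorem integral_subordWeight (z : ℂ) :
    ∫ r in Ioi 0, subordWeight r z = ((1 + ‖z‖ ^ 2) ^ 2)⁻¹ :=
  integral_Ioi_mul_exp_neg_mul (by positivity)

theorem integrableOn_subordWeight (z : ℂ) : IntegrableOn (subordWeight · z) (Ioi 0) :=
  integrableOn_Ioi_mul_exp_neg_mul (by positivity)

theorem subordWeight_eq (r : ℝ) (z : ℂ) :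
    subordWeight r z = r * rexp (-r) * rexp (-r * ‖z‖ ^ 2) := by
  rw [subordWeight, mul_assoc, ← Real.exp_add]
  ring_nf

theorem integrable_subordWeight {r : ℝ} (hr : 0 < r) : Integrable (subordWeight r) := by
  rw [funext (subordWeight_eq r)]
  exact (integrable_exp_neg_mul_sq_norm hr).const_mul _

theorem subordWeight_nonneg {r : ℝ} (hr : 0 ≤ r) (z : ℂ) : 0 ≤ subordWeight r z := by
  unfold subordWeight
  positivity

theorem ae_mem_posQuadrant : ∀ᵐ r ∂posQuadrant, 0 < r.1 ∧ 0 < r.2 := by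
  rw [posQuadrant, Measure.prod_restrict]
  exact ae_restrict_mem (measurableSet_Ioi.prod measurableSet_Ioi)

theorem continuous_subordKernel (s : ℝ) :
    Continuous fun p : (ℝ × ℝ) × (ℂ × ℂ) × (ℂ × ℂ) => subordKernel s p.1 p.2.1 p.2.2 := by
  unfold subordKernel twistedPhase subordWeight
  fun_prop

theorem norm_subordKernel (s : ℝ) {r : ℝ × ℝ} (hr : 0 ≤ r.1 ∧ 0 ≤ r.2) (w z : ℂ × ℂ) :
    ‖subordKernel s r w z‖ = subordWeight r.1 z.1 * subordWeight r.2 z.2 := by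
  rw [subordKernel, norm_mul, norm_exp_neg_I_mul_ofReal, one_mul, norm_real, norm_of_nonneg]
  exact mul_nonneg (subordWeight_nonneg hr.1 _) (subordWeight_nonneg hr.2 _)

theorem integrable_subordKernel (s : ℝ) {r : ℝ × ℝ} (hr : 0 < r.1 ∧ 0 < r.2) (w : ℂ × ℂ) :
    Integrable (subordKernel s r w) := by
  refine integrable_exp_twistedPhase_mul s w
    (g := fun z => subordWeight r.1 z.1 * subordWeight r.2 z.2) ?_
  rw [Measure.volume_eq_prod]
  exact (integrable_subordWeight hr.1).mul_prod (integrable_subordWeight hr.2)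

theorem integral_subordKernel_posQuadrant (s : ℝ) (w z : ℂ × ℂ) :
    ∫ r, subordKernel s r w z ∂posQuadrant = lInt s w z := by
  rw [lInt_eq]
  simp only [subordKernel, integral_const_mul, integral_complex_ofReal]
  rw [integral_prod_mul (fun r₁ => subordWeight r₁ z.1) (fun r₂ => subordWeight r₂ z.2),
    integral_subordWeight, integral_subordWeight]

theorem integrable_uncurry_subordKernel (s : ℝ) (w : ℂ × ℂ) :
    Integrable (Function.uncurry fun z r => subordKernel s r w z) (volume.prod posQuadrant) := by
  have hmeas : AEStronglyMeasurable (Function.uncurry fun z r => subordKernel s r w z)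
      (volume.prod posQuadrant) :=
    ((continuous_subordKernel s).comp (by fun_prop :
      Continuous fun p : (ℂ × ℂ) × (ℝ × ℝ) => (p.2, w, p.1))).aestronglyMeasurable
  refine (integrable_prod_iff hmeas).2 ⟨Filter.Eventually.of_forall fun z => ?_, ?_⟩
  · simp only [Function.uncurry_apply_pair, subordKernel]
    refine Integrable.const_mul ?_ _
    exact ((integrableOn_subordWeight z.1).mul_prod (integrableOn_subordWeight z.2)).ofReal
  · refine integrable_inv_one_add_sq_norm_sq_prod.congr (Filter.Eventually.of_forall fun z => ?_)
    dsimp only [Function.uncurry_apply_pair]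
    rw [integral_congr_ae (ae_mem_posQuadrant.mono fun r hr =>
      norm_subordKernel s ⟨hr.1.le, hr.2.le⟩ w z),
      integral_prod_mul (fun r₁ => subordWeight r₁ z.1) (fun r₂ => subordWeight r₂ z.2),
      integral_subordWeight, integral_subordWeight]

theorem integral_lInt_eq_integral_subordL (s : ℝ) (w : ℂ × ℂ) :
    ∫ z, lInt s w z = ∫ r, subordL s r w ∂posQuadrant := by
  simp_rw [← integral_subordKernel_posQuadrant]
  exact integral_integral_swap (integrable_uncurry_subordKernel s w)

theorem integral_subordKernel_snd (s : ℝ) (w : ℂ × ℂ) {r₁ r₂ : ℝ} (hr₂ : 0 < r₂) (z₁ : ℂ) :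
    ∫ z₂, subordKernel s (r₁, r₂) w (z₁, z₂) =
      cexp (-I * (z₁ * w.1).im) * (subordWeight r₁ z₁ * (π * rexp (-r₂) *
        rexp (-‖w.2 + ((s / 4 : ℝ) : ℂ) * starRingEnd ℂ z₁‖ ^ 2 / (4 * r₂))) : ℝ) := by
  have hsplit : ∀ z₂, subordKernel s (r₁, r₂) w (z₁, z₂) =
      cexp (-I * (z₁ * w.1).im) * (subordWeight r₁ z₁ * (r₂ * rexp (-r₂)) : ℝ) *
        (cexp (-I * (z₂ * (w.2 + ((s / 4 : ℝ) : ℂ) * starRingEnd ℂ z₁)).im) *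
          rexp (-r₂ * ‖z₂‖ ^ 2)) := by
    intro z₂
    rw [subordKernel, twistedPhase_eq, subordWeight_eq r₂, ofReal_add, mul_add, Complex.exp_add]
    simp only [ofReal_mul]
    ring
  have hr₂' : (r₂ : ℂ) ≠ 0 := ofReal_ne_zero.2 hr₂.ne'
  simp_rw [hsplit, integral_const_mul, integral_exp_neg_I_mul_im_mul_exp_neg_mul_sq_norm hr₂]
  simp only [ofReal_mul, ofReal_div]
  field_simp

theorem subordL_eq (s : ℝ) (w : ℂ × ℂ) {r₁ r₂ : ℝ} (hr₁ : 0 < r₁) (hr₂ : 0 < r₂) :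
    subordL s (r₁, r₂) w =
      (π * r₁ * rexp (-r₁) * rexp (-r₂) * rexp (-‖w.2‖ ^ 2 / (4 * r₂)) : ℝ) *
        (π / (r₁ + (s / 8) ^ 2 / r₂ : ℝ) *
          cexp (((-I * w.1.im - (s / (8 * r₂) : ℝ) * w.2.re) ^ 2 +
              (-I * w.1.re + (s / (8 * r₂) : ℝ) * w.2.im) ^ 2) /
            (4 * (r₁ + (s / 8) ^ 2 / r₂ : ℝ)))) := by
  set ρ := r₁ + (s / 8) ^ 2 / r₂ with hρ
  set d₁ : ℂ := -I * w.1.im - (s / (8 * r₂) : ℝ) * w.2.re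
  set d₂ : ℂ := -I * w.1.re + (s / (8 * r₂) : ℝ) * w.2.im
  set C := π * r₁ * rexp (-r₁) * rexp (-r₂) * rexp (-‖w.2‖ ^ 2 / (4 * r₂))
  -- `ρ = r₁ + (s/4)² / (4 r₂)`: the coefficient of `‖z₁‖²` in `‖w₂ + (s/4) z̄₁‖² / (4 r₂)`
  have hsquare : ∀ z₁ : ℂ, cexp (-I * (z₁ * w.1).im) * rexp (-r₁ * ‖z₁‖ ^ 2) *
      rexp (-‖w.2 + ((s / 4 : ℝ) : ℂ) * starRingEnd ℂ z₁‖ ^ 2 / (4 * r₂)) =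
      rexp (-‖w.2‖ ^ 2 / (4 * r₂)) * cexp (-ρ * ‖z₁‖ ^ 2 + (d₁ * z₁.re + d₂ * z₁.im)) := by
    intro z₁
    have hr₂' : (r₂ : ℂ) ≠ 0 := ofReal_ne_zero.2 hr₂.ne'
    simp only [ofReal_exp, ← Complex.exp_add]
    congr 1
    push_cast
    simp only [ofReal_norm_sq, add_re, add_im, mul_re, mul_im, div_ofNat_re, div_ofNat_im,
      ofReal_re, ofReal_im, conj_re, conj_im, d₁, d₂, hρ]
    push_cast
    field_simp
    ring
  have hz₂ : ∀ z₁ : ℂ, ∫ z₂, subordKernel s (r₁, r₂) w (z₁, z₂) =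
      C * cexp (-ρ * ‖z₁‖ ^ 2 + (d₁ * z₁.re + d₂ * z₁.im)) := by
    intro z₁
    rw [integral_subordKernel_snd s w hr₂, subordWeight_eq]
    simp only [C, ofReal_mul]
    linear_combination (π * r₁ * rexp (-r₁) * rexp (-r₂) : ℂ) * hsquare z₁
  rw [subordL, Measure.volume_eq_prod, integral_prod _ (by
    rw [← Measure.volume_eq_prod]; exact integrable_subordKernel s ⟨hr₁, hr₂⟩ w)]
  simp_rw [hz₂, integral_const_mul]
  rw [integral_cexp_neg_mul_sq_norm_add_re_im (by simp only [ofReal_re]; positivity)]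

theorem norm_subordL (s : ℝ) (w : ℂ × ℂ) {r₁ r₂ : ℝ} (hr₁ : 0 < r₁) (hr₂ : 0 < r₂) :
    ‖subordL s (r₁, r₂) w‖ =
      π ^ 2 * r₁ * r₂ / (r₁ * r₂ + (s / 8) ^ 2) * (rexp (-r₁) * rexp (-r₂)) *
        (rexp (-(r₂ / (4 * (r₁ * r₂ + (s / 8) ^ 2))) * ‖w.1‖ ^ 2) *
          rexp (-(r₁ / (4 * (r₁ * r₂ + (s / 8) ^ 2))) * ‖w.2‖ ^ 2)) := by
  set ρ := r₁ + (s / 8) ^ 2 / r₂ with hρ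
  set α := s / (8 * r₂) with hα
  have hρpos : 0 < ρ := by positivity
  have hre : (((-I * w.1.im - α * w.2.re) ^ 2 + (-I * w.1.re + α * w.2.im) ^ 2) /
      (4 * ρ : ℂ)).re = (α ^ 2 * ‖w.2‖ ^ 2 - ‖w.1‖ ^ 2) / (4 * ρ) := by
    rw [show (4 * (ρ : ℂ)) = ((4 * ρ : ℝ) : ℂ) by push_cast; ring, div_ofReal_re, Complex.sq_norm,
      Complex.sq_norm, normSq_apply, normSq_apply]
    simp only [sq, add_re, add_im, sub_re, sub_im, mul_re, mul_im, neg_re, neg_im, I_re, I_im,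
      ofReal_re, ofReal_im]
    ring
  have hexponent : -‖w.2‖ ^ 2 / (4 * r₂) + (α ^ 2 * ‖w.2‖ ^ 2 - ‖w.1‖ ^ 2) / (4 * ρ) =
      -(r₂ / (4 * (r₁ * r₂ + (s / 8) ^ 2))) * ‖w.1‖ ^ 2 +
        -(r₁ / (4 * (r₁ * r₂ + (s / 8) ^ 2))) * ‖w.2‖ ^ 2 := by
    rw [hρ, hα]
    field_simp
    ring
  rw [subordL_eq s w hr₁ hr₂, norm_mul, norm_mul, norm_real, norm_div, norm_real, norm_real,
    Complex.norm_exp, hre, Real.norm_of_nonneg (by positivity), Real.norm_of_nonneg pi_pos.le,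
    Real.norm_of_nonneg hρpos.le, ← Real.exp_add (-(r₂ / _) * ‖w.1‖ ^ 2), ← hexponent,
    Real.exp_add, hρ]
  field_simp

theorem integral_norm_subordL (s : ℝ) {r₁ r₂ : ℝ} (hr₁ : 0 < r₁) (hr₂ : 0 < r₂) :
    ∫ w, ‖subordL s (r₁, r₂) w‖ =
      16 * π ^ 4 *
        (r₁ * rexp (-r₁) * (r₂ * rexp (-r₂)) + (s / 8) ^ 2 * (rexp (-r₁) * rexp (-r₂))) := by
  have hκ : 0 < r₁ * r₂ + (s / 8) ^ 2 := by positivity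
  simp_rw [norm_subordL s _ hr₁ hr₂, integral_const_mul]
  rw [Measure.volume_eq_prod, integral_prod_mul (fun w₁ : ℂ => rexp (-_ * ‖w₁‖ ^ 2))
    (fun w₂ : ℂ => rexp (-_ * ‖w₂‖ ^ 2)), integral_exp_neg_mul_sq_norm (by positivity),
    integral_exp_neg_mul_sq_norm (by positivity)]
  field_simp
  ring

theorem stronglyMeasurable_uncurry_subordL (s : ℝ) :
    StronglyMeasurable (Function.uncurry (subordL s)) :=
  ((continuous_subordKernel s).comp (by fun_prop : Continuous
    fun p : ((ℝ × ℝ) × (ℂ × ℂ)) × (ℂ × ℂ) => (p.1.1, p.1.2, p.2))).stronglyMeasurable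
    |>.integral_prod_right'

theorem integrable_subordL (s : ℝ) {r : ℝ × ℝ} (hr : 0 < r.1 ∧ 0 < r.2) :
    Integrable (subordL s r) := by
  refine (integrable_norm_iff ?_).1 (Integrable.of_integral_ne_zero ?_)
  · exact ((stronglyMeasurable_uncurry_subordL s).comp_measurable
      measurable_prodMk_left).aestronglyMeasurable
  · obtain ⟨hr₁, hr₂⟩ := hr
    rw [integral_norm_subordL s hr₁ hr₂]
    positivity

theorem integrable_uncurry_subordL (s : ℝ) :
    Integrable (Function.uncurry (subordL s)) (posQuadrant.prod volume) := by
  refine (integrable_prod_iff (stronglyMeasurable_uncurry_subordL s).aestronglyMeasurable).2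
    ⟨ae_mem_posQuadrant.mono fun r hr => integrable_subordL s hr, ?_⟩
  have hbound : Integrable (fun r : ℝ × ℝ => 16 * π ^ 4 * (r.1 * rexp (-r.1) * (r.2 * rexp (-r.2)) +
      (s / 8) ^ 2 * (rexp (-r.1) * rexp (-r.2)))) posQuadrant := by
    have hpoly : IntegrableOn (fun r : ℝ => r * rexp (-r)) (Ioi 0) := by
      simpa using integrableOn_Ioi_mul_exp_neg_mul one_pos
    have hexp := integrableOn_exp_neg_Ioi 0
    exact ((hpoly.mul_prod hpoly).add ((hexp.mul_prod hexp).const_mul _)).const_mul _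
  refine hbound.congr (ae_mem_posQuadrant.mono fun r hr => ?_)
  simp only [Function.uncurry_apply_pair]
  rw [integral_norm_subordL s hr.1 hr.2]

theorem stmt_16 (s : ℝ) :
    (∀ w : ℂ × ℂ, Integrable (fun z : ℂ × ℂ => lInt s w z)) ∧
      Integrable (fun w : ℂ × ℂ => ∫ z : ℂ × ℂ, lInt s w z) := by
  refine ⟨integrable_lInt s, ?_⟩
  simp_rw [integral_lInt_eq_integral_subordL]
  exact (integrable_uncurry_subordL s).integral_prod_right
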